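/- Let S be a ν×ν diagonal positive definite matrix and B̃ a ν×ν real matrix. If (I - B̃)ᵀS + S(I - B̃) is positive definite, then B̃ᵀS + SB̃ - 2S is negative definite, and hence for every diagonal matrix Θ with entries in (0,1], I - ΘB̃ is invertible. -/

import Mathlib

/-!
`BᵀS + SB - 2S` is the negative of `(I - B)ᵀS + S(I - B)`, which gives the first claim.
For the second, write `S = diag d`: the quadratic form of `BᵀS + SB - 2S` at `v` is
`2 ∑ dᵢ vᵢ ((Bv)ᵢ - vᵢ)`. If `(I - ΘB)v = 0` then `vᵢ = θᵢ (Bv)ᵢ`, so each summand equals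
`dᵢ θᵢ (1 - θᵢ) (Bv)ᵢ² ≥ 0` when `0 ≤ θᵢ ≤ 1`, and negative definiteness forces `v = 0`.
-/

open Matrix

variable {ι R : Type*} [Fintype ι] [DecidableEq ι]

theorem transpose_mul_add_mul_sub_two_smul_eq_neg [Ring R] (B S : Matrix ι ι R) :
    Bᵀ * S + S * B - (2 : R) • S = -((1 - B)ᵀ * S + S * (1 - B)) := by
  rw [transpose_sub, transpose_one, sub_mul, mul_sub, one_mul, mul_one, two_smul]
  abel

section CommRing

variable [CommRing R]

theorem dotProduct_diagonal_lyapunov_mulVec (B : Matrix ι ι R) (d v : ι → R) :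
    v ⬝ᵥ ((Bᵀ * diagonal d + diagonal d * B - (2 : R) • diagonal d) *ᵥ v)
      = 2 * ∑ i, d i * v i * ((B *ᵥ v) i - v i) := by
  rw [sub_mulVec, add_mulVec, ← mulVec_mulVec, ← mulVec_mulVec, smul_mulVec, dotProduct_sub,
    dotProduct_add, dotProduct_smul, dotProduct_mulVec v Bᵀ, vecMul_transpose]
  simp only [dotProduct, mulVec_diagonal, smul_eq_mul, Finset.mul_sum, ← Finset.sum_add_distrib,
    ← Finset.sum_sub_distrib]
  exact Finset.sum_congr rfl fun i _ => by ring

end CommRing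

variable [Field R] [LinearOrder R] [IsStrictOrderedRing R]

theorem isUnit_one_sub_diagonal_mul_of_diagonal_lyapunov {B : Matrix ι ι R} {d θ : ι → R}
    (hd : ∀ i, 0 ≤ d i) (hθ : ∀ i, θ i ∈ Set.Icc (0 : R) 1)
    (hneg : ∀ v : ι → R, v ≠ 0 →
      v ⬝ᵥ ((Bᵀ * diagonal d + diagonal d * B - (2 : R) • diagonal d) *ᵥ v) < 0) :
    IsUnit (1 - diagonal θ * B) := by
  rw [isUnit_iff_isUnit_det, isUnit_iff_ne_zero, ne_eq, ← exists_mulVec_eq_zero_iff]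
  rintro ⟨v, hv, hker⟩
  rw [sub_mulVec, one_mulVec, ← mulVec_mulVec] at hker
  have hv_eq (i : ι) : v i = θ i * (B *ᵥ v) i := by
    simpa only [Pi.sub_apply, mulVec_diagonal, Pi.zero_apply, sub_eq_zero] using congrFun hker i
  have hsummand_nonneg (i : ι) : 0 ≤ d i * v i * ((B *ᵥ v) i - v i) := by
    calc 0 ≤ d i * θ i * (1 - θ i) * (B *ᵥ v) i ^ 2 :=
          mul_nonneg (mul_nonneg (mul_nonneg (hd i) (hθ i).1) (sub_nonneg.2 (hθ i).2))
            (sq_nonneg _)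
      _ = d i * v i * ((B *ᵥ v) i - v i) := by rw [hv_eq i]; ring
  have hquad := hneg v hv
  rw [dotProduct_diagonal_lyapunov_mulVec] at hquad
  linarith [Finset.sum_nonneg fun i (_ : i ∈ Finset.univ) => hsummand_nonneg i]

/-- If `(I-B̃)ᵀS + S(I-B̃) ≻ 0` with `S` diagonal positive definite, then
`B̃ᵀS + SB̃ - 2S ≺ 0`, and `I - ΘB̃` is invertible for every diagonal `Θ`
with entries in `(0,1]`. -/
theorem stmt_14 {ν : ℕ} (sd : Fin ν → ℝ) (hsd : ∀ i, 0 < sd i)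
    (Bt : Matrix (Fin ν) (Fin ν) ℝ)
    (hpos : ((1 - Bt)ᵀ * Matrix.diagonal sd
      + Matrix.diagonal sd * (1 - Bt)).PosDef) :
    (∀ v : Fin ν → ℝ, v ≠ 0 →
      v ⬝ᵥ ((Btᵀ * Matrix.diagonal sd + Matrix.diagonal sd * Bt
        - (2 : ℝ) • Matrix.diagonal sd) *ᵥ v) < 0)
    ∧ ∀ θ : Fin ν → ℝ, (∀ i, θ i ∈ Set.Ioc (0 : ℝ) 1) →
        IsUnit (1 - Matrix.diagonal θ * Bt) := by
  have hneg : ∀ v : Fin ν → ℝ, v ≠ 0 →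
      v ⬝ᵥ ((Btᵀ * diagonal sd + diagonal sd * Bt - (2 : ℝ) • diagonal sd) *ᵥ v) < 0 := by
    intro v hv
    have := (posDef_iff_dotProduct_mulVec.mp hpos).2 hv
    rw [transpose_mul_add_mul_sub_two_smul_eq_neg, neg_mulVec, dotProduct_neg]
    simpa using this
  exact ⟨hneg, fun θ hθ => isUnit_one_sub_diagonal_mul_of_diagonal_lyapunov
    (fun i => (hsd i).le) (fun i => Set.Ioc_subset_Icc_self (hθ i)) hneg⟩
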